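/- Let γ ∈ (0,1), φ > 0, ν ∈ (0,1), k ∈ ℝ. The function h(x,t) = x^(ν/2) E_γ(−φ t^γ) satisfies h(x,0) = x^(ν/2), h(0,t) = 0, and the space-time fractional equation ∂^γ h/∂t^γ = k ∂/∂x ( h · ∂^ν h/∂x^ν ) − φ h for x > 0, t > 0. -/

import Mathlib

/-!
The Caputo derivative maps powers to powers: by the Beta integral,
`D^ν x^p = Γ(p+1)/Γ(p+1-ν) x^(p-ν)` for `p > 0`. Hence `x^(ν/2) D^ν x^(ν/2)` is constant, so the
spatial term vanishes, and `D^γ` sends the `(i+1)`-st term of the Mittag-Leffler series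
`Σ (-φ)^i t^(γi)/Γ(γi+1)` to `-φ` times the `i`-th one, so that `D^γ E_γ(-φ t^γ) = -φ E_γ(-φ t^γ)`.
Differentiating the series termwise and exchanging it with the Caputo integral is justified by
the growth `Γ(x+γ)/Γ(x) ≥ x/(x+γ)^(1-γ)`, a consequence of the log-convexity of `Γ`.
-/

/-- Caputo fractional derivative of order `ν` with zero starting point. -/
noncomputable def caputo (ν : ℝ) (f : ℝ → ℝ) (z : ℝ) : ℝ :=
  (Real.Gamma (1 - ν))⁻¹ * ∫ s in (0:ℝ)..z, (z - s) ^ (-ν) * deriv f s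

/-- One-parameter Mittag-Leffler function evaluated at `-φ * t ^ γ`. -/
noncomputable def mittagLeffler (γ φ t : ℝ) : ℝ :=
  ∑' i : ℕ, (-φ * t ^ γ) ^ i / Real.Gamma (γ * i + 1)

open Real Set MeasureTheory Filter Topology

section Beta

variable {a b z : ℝ}

theorem integral_Ioo_rpow_mul_sub_rpow (ha : 0 < a) (hb : 0 < b) (hz : 0 < z) :
    ∫ s in Ioo 0 z, s ^ (a - 1) * (z - s) ^ (b - 1)
      = z ^ (a + b - 1) * (Gamma a * Gamma b / Gamma (a + b)) := by
  have hbeta := Complex.betaIntegral_scaled a b hz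
  rw [Complex.betaIntegral_eq_Gamma_mul_div _ _ (by simpa using ha) (by simpa using hb),
    intervalIntegral.integral_of_le hz.le, integral_Ioc_eq_integral_Ioo] at hbeta
  have hlhs : ∫ s in Ioo 0 z, (s : ℂ) ^ ((a : ℂ) - 1) * ((z : ℂ) - s) ^ ((b : ℂ) - 1)
      = ((∫ s in Ioo 0 z, s ^ (a - 1) * (z - s) ^ (b - 1) : ℝ) : ℂ) := by
    rw [← integral_complex_ofReal]
    refine setIntegral_congr_fun measurableSet_Ioo fun s hs => ?_
    rw [Complex.ofReal_mul, Complex.ofReal_cpow hs.1.le, Complex.ofReal_cpow (sub_pos.2 hs.2).le]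
    push_cast
    ring
  have hrhs :
      (z : ℂ) ^ ((a : ℂ) + b - 1) * (Complex.Gamma a * Complex.Gamma b / Complex.Gamma (a + b))
        = ((z ^ (a + b - 1) * (Gamma a * Gamma b / Gamma (a + b)) : ℝ) : ℂ) := by
    rw [Complex.ofReal_mul, Complex.ofReal_cpow hz.le]
    push_cast [← Complex.Gamma_ofReal]
    rfl
  rw [hlhs, hrhs] at hbeta
  exact_mod_cast hbeta

theorem integrableOn_rpow_mul_sub_rpow (ha : 0 < a) (hb : 0 < b) (hz : 0 < z) :
    IntegrableOn (fun s => s ^ (a - 1) * (z - s) ^ (b - 1)) (Ioo 0 z) :=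
  Integrable.of_integral_ne_zero <| by
    rw [integral_Ioo_rpow_mul_sub_rpow ha hb hz]
    have := Gamma_pos_of_pos ha
    have := Gamma_pos_of_pos hb
    have := Gamma_pos_of_pos (add_pos ha hb)
    positivity

end Beta

section Caputo

variable {ν p z : ℝ}

theorem caputo_const_mul (ν c : ℝ) (f : ℝ → ℝ) (z : ℝ) :
    caputo ν (fun x => c * f x) z = c * caputo ν f z := by
  simp only [caputo, deriv_const_mul_field, mul_left_comm _ c,
    intervalIntegral.integral_const_mul]

theorem caputo_rpow_eq_integral (ν p : ℝ) (hz : 0 ≤ z) :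
    caputo ν (fun x => x ^ p) z
      = (Gamma (1 - ν))⁻¹ * ∫ s in Ioo 0 z, p * (s ^ (p - 1) * (z - s) ^ (-ν)) := by
  simp only [caputo, Real.deriv_rpow_const, intervalIntegral.integral_of_le hz,
    integral_Ioc_eq_integral_Ioo, mul_left_comm _ p, mul_comm ((z - _) ^ (-ν))]

theorem integrableOn_caputo_rpow (hν : ν < 1) (hp : 0 ≤ p) (hz : 0 < z) :
    IntegrableOn (fun s => p * (s ^ (p - 1) * (z - s) ^ (-ν))) (Ioo 0 z) := by
  rcases hp.eq_or_lt with rfl | hp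
  · simp
  · have := integrableOn_rpow_mul_sub_rpow hp (sub_pos.2 hν) hz
    rw [sub_sub_cancel_left] at this
    exact this.const_mul p

theorem caputo_rpow (hν : ν < 1) (hp : 0 < p) (hz : 0 < z) :
    caputo ν (fun x => x ^ p) z = Gamma (p + 1) / Gamma (p + 1 - ν) * z ^ (p - ν) := by
  have hbeta := integral_Ioo_rpow_mul_sub_rpow hp (sub_pos.2 hν) hz
  rw [sub_sub_cancel_left, show p + (1 - ν) = p + 1 - ν by ring,
    show p + 1 - ν - 1 = p - ν by ring] at hbeta
  have hΓ : Gamma (1 - ν) ≠ 0 := (Gamma_pos_of_pos (sub_pos.2 hν)).ne'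
  rw [caputo_rpow_eq_integral ν p hz.le, integral_const_mul, hbeta, Gamma_add_one hp.ne']
  field_simp

theorem caputo_rpow_nonneg (hν : ν < 1) (hp : 0 ≤ p) (hz : 0 ≤ z) :
    0 ≤ caputo ν (fun x => x ^ p) z := by
  rw [caputo_rpow_eq_integral ν p hz]
  refine mul_nonneg (inv_nonneg.2 (Gamma_pos_of_pos (sub_pos.2 hν)).le)
    (setIntegral_nonneg measurableSet_Ioo fun s hs => ?_)
  have := hs.1.le
  have := (sub_pos.2 hs.2).le
  positivity

/-- Termwise Caputo differentiation of a generalized power series `f = ∑ c i * x ^ p i`. -/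
theorem caputo_eq_tsum_caputo_rpow (hν : ν < 1) (hz : 0 < z) {f : ℝ → ℝ} {c p : ℕ → ℝ}
    (hp : ∀ i, 0 ≤ p i)
    (hf : ∀ s ∈ Ioo 0 z, HasDerivAt f (∑' i, c i * (p i * s ^ (p i - 1))) s)
    (hsum : Summable fun i => |c i| * caputo ν (fun x => x ^ p i) z) :
    caputo ν f z = ∑' i, c i * caputo ν (fun x => x ^ p i) z := by
  set K : ℕ → ℝ → ℝ := fun i s => p i * (s ^ (p i - 1) * (z - s) ^ (-ν))
  have hK_int (i : ℕ) : IntegrableOn (K i) (Ioo 0 z) := integrableOn_caputo_rpow hν (hp i) hz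
  have hK_nonneg (i : ℕ) : ∀ s ∈ Ioo 0 z, 0 ≤ K i s := fun s hs => by
    have := hp i
    have := hs.1.le
    have := (sub_pos.2 hs.2).le
    positivity
  have hΓ : Gamma (1 - ν) ≠ 0 := (Gamma_pos_of_pos (sub_pos.2 hν)).ne'
  have hK_integral (i : ℕ) :
      ∫ s in Ioo 0 z, K i s = Gamma (1 - ν) * caputo ν (fun x => x ^ p i) z := by
    rw [caputo_rpow_eq_integral ν (p i) hz.le, mul_inv_cancel_left₀ hΓ]
  have hnorm (i : ℕ) : ∫ s in Ioo 0 z, ‖c i * K i s‖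
      = Gamma (1 - ν) * (|c i| * caputo ν (fun x => x ^ p i) z) := by
    rw [setIntegral_congr_fun measurableSet_Ioo fun s hs => by
        rw [norm_mul, Real.norm_eq_abs, Real.norm_of_nonneg (hK_nonneg i s hs)],
      integral_const_mul, hK_integral]
    ring
  have hseries : ∑' i, ∫ s in Ioo 0 z, c i * K i s = ∫ s in Ioo 0 z, ∑' i, c i * K i s :=
    integral_tsum_of_summable_integral_norm (fun i => (hK_int i).const_mul (c i))
      (by simpa only [hnorm] using hsum.mul_left (Gamma (1 - ν)))
  rw [caputo, intervalIntegral.integral_of_le hz.le, integral_Ioc_eq_integral_Ioo,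
    setIntegral_congr_fun measurableSet_Ioo (g := fun s => ∑' i, c i * K i s) fun s hs => by
      rw [(hf s hs).deriv, mul_comm, ← tsum_mul_right]
      exact tsum_congr fun i => by ring,
    ← hseries, ← tsum_mul_left]
  refine tsum_congr fun i => ?_
  rw [integral_const_mul, hK_integral, mul_left_comm, inv_mul_cancel_left₀ hΓ]

end Caputo

section GammaGrowth

variable {γ : ℝ}

/-- A Gautschi-type bound, from log-convexity of `Γ` between `x + γ` and `x + γ + 1`. -/
theorem Gamma_div_Gamma_add_le (hγ0 : 0 < γ) (hγ1 : γ < 1) {x : ℝ} (hx : 0 < x) :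
    Gamma x / Gamma (x + γ) ≤ (x + γ) ^ (1 - γ) / x := by
  have hxγ : 0 < x + γ := by linarith
  have hΓ : 0 < Gamma (x + γ) := Gamma_pos_of_pos hxγ
  have hconv := Gamma_mul_add_mul_le_rpow_Gamma_mul_rpow_Gamma hxγ (by linarith : 0 < x + γ + 1)
    hγ0 (sub_pos.2 hγ1) (add_sub_cancel γ 1)
  rw [show γ * (x + γ) + (1 - γ) * (x + γ + 1) = x + 1 by ring, Gamma_add_one hx.ne',
    Gamma_add_one hxγ.ne', mul_rpow hxγ.le hΓ.le, mul_left_comm, ← rpow_add hΓ,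
    add_sub_cancel, rpow_one] at hconv
  rw [div_le_div_iff₀ hΓ hx]
  linarith

theorem tendsto_Gamma_div_Gamma_add (hγ0 : 0 < γ) (hγ1 : γ < 1) :
    Tendsto (fun x => Gamma x / Gamma (x + γ)) atTop (𝓝 0) := by
  have hbound : Tendsto (fun x : ℝ => 2 ^ (1 - γ) * x ^ (-γ)) atTop (𝓝 0) := by
    simpa using (tendsto_rpow_neg_atTop hγ0).const_mul (2 ^ (1 - γ) : ℝ)
  refine tendsto_of_tendsto_of_tendsto_of_le_of_le' tendsto_const_nhds hbound ?_ ?_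
  · filter_upwards [eventually_gt_atTop 0] with x hx
    exact div_nonneg (Gamma_pos_of_pos hx).le (Gamma_pos_of_pos (by linarith)).le
  · filter_upwards [eventually_ge_atTop γ] with x hx
    have hx0 : 0 < x := hγ0.trans_le hx
    calc Gamma x / Gamma (x + γ) ≤ (x + γ) ^ (1 - γ) / x := Gamma_div_Gamma_add_le hγ0 hγ1 hx0
      _ ≤ (2 * x) ^ (1 - γ) / x := by gcongr; linarith
      _ = 2 ^ (1 - γ) * x ^ (-γ) := by
        rw [mul_rpow zero_le_two hx0.le, mul_div_assoc, ← rpow_sub_one hx0.ne', sub_sub_cancel_left]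

theorem summable_pow_div_Gamma (hγ0 : 0 < γ) (hγ1 : γ < 1) (C : ℝ) {d : ℝ} (hd : 0 < d) :
    Summable fun i : ℕ => C ^ i / Gamma (γ * i + d) := by
  have harg : Tendsto (fun i : ℕ => γ * i + d) atTop atTop :=
    tendsto_atTop_add_const_right _ _ (tendsto_natCast_atTop_atTop.const_mul_atTop hγ0)
  have hratio := ((tendsto_Gamma_div_Gamma_add hγ0 hγ1).comp harg).const_mul |C|
  rw [mul_zero] at hratio
  refine summable_of_ratio_norm_eventually_le one_half_lt_one ?_
  filter_upwards [hratio.eventually (gt_mem_nhds one_half_pos)] with i hi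
  have hΓ : 0 < Gamma (γ * i + d) := Gamma_pos_of_pos (by positivity)
  have hΓ' : 0 < Gamma (γ * i + d + γ) := Gamma_pos_of_pos (by positivity)
  rw [Function.comp_apply, ← mul_div_assoc, div_lt_iff₀ hΓ'] at hi
  rw [norm_div, norm_div, Real.norm_of_nonneg hΓ.le, Nat.cast_succ,
    show γ * (i + 1 : ℝ) + d = γ * i + d + γ by ring, Real.norm_of_nonneg hΓ'.le, norm_pow,
    norm_pow, pow_succ, div_le_iff₀ hΓ', Real.norm_eq_abs]
  calc |C| ^ i * |C| = |C| ^ i / Gamma (γ * i + d) * (|C| * Gamma (γ * i + d)) := by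
        field_simp
    _ ≤ |C| ^ i / Gamma (γ * i + d) * (1 / 2 * Gamma (γ * i + d + γ)) := by gcongr
    _ = _ := by ring

end GammaGrowth

section MittagLeffler

variable {γ φ : ℝ}

noncomputable def mittagLefflerCoeff (γ φ : ℝ) (i : ℕ) : ℝ := (-φ) ^ i / Gamma (γ * i + 1)

theorem abs_mittagLefflerCoeff (hγ : 0 ≤ γ) (i : ℕ) :
    |mittagLefflerCoeff γ φ i| = |φ| ^ i / Gamma (γ * i + 1) := by
  rw [mittagLefflerCoeff, abs_div, abs_pow, abs_neg,
    abs_of_pos (Gamma_pos_of_pos (by positivity))]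

theorem summable_abs_mittagLefflerCoeff_mul_pow (hγ0 : 0 < γ) (hγ1 : γ < 1) (φ C : ℝ) :
    Summable fun i => |mittagLefflerCoeff γ φ i| * C ^ i := by
  simpa only [abs_mittagLefflerCoeff hγ0.le, div_mul_eq_mul_div, ← mul_pow]
    using summable_pow_div_Gamma hγ0 hγ1 (|φ| * C) one_pos

theorem mittagLeffler_eq_tsum {τ : ℝ} (hτ : 0 ≤ τ) :
    mittagLeffler γ φ τ = ∑' i, mittagLefflerCoeff γ φ i * τ ^ (γ * i) := by
  refine tsum_congr fun i => ?_
  rw [mittagLefflerCoeff, rpow_mul_natCast hτ, mul_pow, div_mul_eq_mul_div]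

theorem mittagLeffler_zero (hγ : γ ≠ 0) : mittagLeffler γ φ 0 = 1 := by
  rw [mittagLeffler, tsum_eq_single 0 fun i hi => by simp [zero_rpow hγ, hi]]
  simp

theorem hasDerivAt_mittagLeffler (hγ0 : 0 < γ) (hγ1 : γ < 1) {s : ℝ} (hs : 0 < s) :
    HasDerivAt (mittagLeffler γ φ)
      (∑' i, mittagLefflerCoeff γ φ i * (γ * i * s ^ (γ * i - 1))) s := by
  set T := s + 1
  have hbound (i : ℕ) {y : ℝ} (hy : y ∈ Ioo (s / 2) T) :
      ‖mittagLefflerCoeff γ φ i * (γ * i * y ^ (γ * i - 1))‖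
        ≤ 2 * γ / s * (|mittagLefflerCoeff γ φ i| * (2 * T ^ γ) ^ i) := by
    have hy0 : 0 < y := by linarith [hy.1]
    have hi : (i : ℝ) ≤ 2 ^ i := by exact_mod_cast Nat.lt_two_pow_self.le
    have hpow : y ^ (γ * i - 1) ≤ (T ^ γ) ^ i * (2 / s) := by
      rw [rpow_sub_one hy0.ne', ← rpow_mul_natCast (by positivity), div_eq_mul_inv, ← inv_div]
      gcongr
      · exact hy.2.le
      · exact hy.1.le
    calc ‖mittagLefflerCoeff γ φ i * (γ * i * y ^ (γ * i - 1))‖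
        = |mittagLefflerCoeff γ φ i| * (γ * i * y ^ (γ * i - 1)) := by
          rw [norm_mul, Real.norm_eq_abs, Real.norm_of_nonneg (by positivity)]
      _ ≤ |mittagLefflerCoeff γ φ i| * (γ * 2 ^ i * ((T ^ γ) ^ i * (2 / s))) := by gcongr
      _ = 2 * γ / s * (|mittagLefflerCoeff γ φ i| * (2 * T ^ γ) ^ i) := by ring
  have hseries : HasDerivAt (fun τ => ∑' i, mittagLefflerCoeff γ φ i * τ ^ (γ * i))
      (∑' i, mittagLefflerCoeff γ φ i * (γ * i * s ^ (γ * i - 1))) s := by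
    refine hasDerivAt_tsum_of_isPreconnected
      ((summable_abs_mittagLefflerCoeff_mul_pow hγ0 hγ1 φ (2 * T ^ γ)).mul_left (2 * γ / s))
      isOpen_Ioo isPreconnected_Ioo (fun i y hy => ?_) (fun i y hy => hbound i hy)
      (y₀ := s) ⟨by linarith, by linarith⟩ ?_ ⟨by linarith, by linarith⟩
    · exact (hasDerivAt_rpow_const (Or.inl (by linarith [hy.1] : (0 : ℝ) < y).ne')).const_mul _
    · refine Summable.of_norm ?_
      simpa only [norm_mul, Real.norm_eq_abs, rpow_mul_natCast hs.le, abs_pow,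
        abs_of_nonneg (rpow_nonneg hs.le γ)]
        using summable_abs_mittagLefflerCoeff_mul_pow hγ0 hγ1 φ (s ^ γ)
  refine hseries.congr_of_eventuallyEq ?_
  filter_upwards [eventually_gt_nhds hs] with τ hτ
  exact mittagLeffler_eq_tsum hτ.le

theorem mittagLefflerCoeff_succ_mul_caputo_rpow (hγ0 : 0 < γ) (hγ1 : γ < 1) {t : ℝ} (ht : 0 < t)
    (i : ℕ) :
    mittagLefflerCoeff γ φ (i + 1) * caputo γ (fun x => x ^ (γ * (i + 1 : ℕ))) t
      = -φ * (mittagLefflerCoeff γ φ i * t ^ (γ * i)) := by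
  have hΓ : Gamma (γ * (i + 1 : ℕ) + 1) ≠ 0 := (Gamma_pos_of_pos (by positivity)).ne'
  rw [caputo_rpow hγ1 (by positivity) ht, mittagLefflerCoeff, mittagLefflerCoeff,
    show γ * (i + 1 : ℕ) + 1 - γ = γ * i + 1 by push_cast; ring,
    show γ * (i + 1 : ℕ) - γ = γ * i by push_cast; ring, pow_succ]
  field_simp

theorem caputo_mittagLeffler (hγ0 : 0 < γ) (hγ1 : γ < 1) {t : ℝ} (ht : 0 < t) :
    caputo γ (mittagLeffler γ φ) t = -φ * mittagLeffler γ φ t := by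
  have hsucc := mittagLefflerCoeff_succ_mul_caputo_rpow (φ := φ) hγ0 hγ1 ht
  have hzero : caputo γ (fun x => x ^ (γ * (0 : ℕ))) t = 0 := by
    rw [caputo_rpow_eq_integral γ _ ht.le]
    simp
  have hsum : Summable fun i => |mittagLefflerCoeff γ φ i| * caputo γ (fun x => x ^ (γ * i)) t := by
    refine (summable_nat_add_iff 1).1 ?_
    refine ((summable_abs_mittagLefflerCoeff_mul_pow hγ0 hγ1 φ (t ^ γ)).mul_left |φ|).congr
      fun i => ?_
    rw [← abs_of_nonneg (caputo_rpow_nonneg hγ1 (by positivity) ht.le), ← abs_mul, hsucc,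
      abs_mul, abs_neg, abs_mul, abs_of_nonneg (rpow_nonneg ht.le _), rpow_mul_natCast ht.le]
  rw [caputo_eq_tsum_caputo_rpow hγ1 ht (fun i => by positivity)
      (fun s hs => hasDerivAt_mittagLeffler hγ0 hγ1 hs.1) hsum,
    (Summable.of_norm (hsum.congr fun i => ?_)).tsum_eq_zero_add, hzero, mul_zero, zero_add,
    tsum_congr hsucc, tsum_mul_left, mittagLeffler_eq_tsum ht.le]
  rw [norm_mul, Real.norm_eq_abs,
    Real.norm_of_nonneg (caputo_rpow_nonneg hγ1 (by positivity) ht.le)]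

end MittagLeffler

section SpatialTerm

variable {ν : ℝ}

theorem rpow_half_mul_caputo_rpow_half (hν0 : 0 < ν) (hν1 : ν < 1) {ξ : ℝ} (hξ : 0 < ξ) :
    ξ ^ (ν / 2) * caputo ν (fun x => x ^ (ν / 2)) ξ = Gamma (ν / 2 + 1) / Gamma (1 - ν / 2) := by
  rw [caputo_rpow hν1 (by positivity) hξ, show ν / 2 + 1 - ν = 1 - ν / 2 by ring, mul_left_comm,
    ← rpow_add hξ, show ν / 2 + (ν / 2 - ν) = 0 by ring, rpow_zero, mul_one]

theorem deriv_rpow_half_mul_caputo_rpow_half (hν0 : 0 < ν) (hν1 : ν < 1) {x : ℝ} (hx : 0 < x) :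
    deriv (fun ξ => ξ ^ (ν / 2) * caputo ν (fun x => x ^ (ν / 2)) ξ) x = 0 := by
  rw [Filter.EventuallyEq.deriv_eq (f := fun _ => Gamma (ν / 2 + 1) / Gamma (1 - ν / 2)),
    deriv_const]
  filter_upwards [eventually_gt_nhds hx] with ξ hξ
  exact rpow_half_mul_caputo_rpow_half hν0 hν1 hξ

end SpatialTerm

theorem spacetime_fractional_solution_general (γ φ ν k : ℝ) (hγ : γ ∈ Set.Ioo (0:ℝ) 1)
    (hν : ν ∈ Set.Ioo (0:ℝ) 1)
    (h : ℝ → ℝ → ℝ)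
    (hdef : h = fun x t => x ^ (ν / 2) * mittagLeffler γ φ t) :
    (∀ x, h x 0 = x ^ (ν / 2)) ∧ (∀ t, h 0 t = 0) ∧
      ∀ x > (0:ℝ), ∀ t > (0:ℝ),
        caputo γ (fun τ => h x τ) t
          = k * deriv (fun ξ => h ξ t * caputo ν (fun ξ' => h ξ' t) ξ) x - φ * h x t := by
  obtain ⟨hγ0, hγ1⟩ := hγ
  obtain ⟨hν0, hν1⟩ := hν
  subst hdef
  refine ⟨fun x => by simp [mittagLeffler_zero hγ0.ne'],
    fun t => by simp [zero_rpow (by positivity : ν / 2 ≠ 0)], fun x hx t ht => ?_⟩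
  have hspace : (fun ξ => ξ ^ (ν / 2) * mittagLeffler γ φ t
        * caputo ν (fun ξ' => ξ' ^ (ν / 2) * mittagLeffler γ φ t) ξ)
      = fun ξ => mittagLeffler γ φ t ^ 2 * (ξ ^ (ν / 2) * caputo ν (fun x => x ^ (ν / 2)) ξ) := by
    funext ξ
    simp_rw [mul_comm _ (mittagLeffler γ φ t), caputo_const_mul]
    ring
  rw [caputo_const_mul, caputo_mittagLeffler hγ0 hγ1 ht, hspace, deriv_const_mul_field,
    deriv_rpow_half_mul_caputo_rpow_half hν0 hν1 hx]
  ring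

theorem spacetime_fractional_solution (γ φ ν k : ℝ) (hγ : γ ∈ Set.Ioo (0:ℝ) 1)
    (hφ : 0 < φ) (hν : ν ∈ Set.Ioo (0:ℝ) 1)
    (h : ℝ → ℝ → ℝ)
    (hdef : h = fun x t => x ^ (ν / 2) * mittagLeffler γ φ t) :
    (∀ x, h x 0 = x ^ (ν / 2)) ∧ (∀ t, h 0 t = 0) ∧
      ∀ x > (0:ℝ), ∀ t > (0:ℝ),
        caputo γ (fun τ => h x τ) t
          = k * deriv (fun ξ => h ξ t * caputo ν (fun ξ' => h ξ' t) ξ) x - φ * h x t :=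
  spacetime_fractional_solution_general γ φ ν k hγ hν h hdef
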